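/- For any complex number a and τ tending to 0 along the positive imaginary axis, ϑ₁₁(τ, aτ) is asymptotic to −(−iτ)^{−1/2} · 2i·sin(aπ) · e^{−πi/(4τ)} (ratio tending to 1 as τ ↓ 0), provided sin(aπ) ≠ 0. -/

import Mathlib

open Real Complex Filter Topology

noncomputable section

noncomputable def theta00 (τ z : ℂ) : ℂ :=
  ∑' n : ℤ, Complex.exp (2*(π:ℂ)*Complex.I*(n:ℂ)*z) *
    Complex.exp (2*(π:ℂ)*Complex.I*τ*((n:ℂ)^2/2))

noncomputable def theta01 (τ z : ℂ) : ℂ :=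
  ∑' n : ℤ, (-1:ℂ)^n * Complex.exp (2*(π:ℂ)*Complex.I*(n:ℂ)*z) *
    Complex.exp (2*(π:ℂ)*Complex.I*τ*((n:ℂ)^2/2))

noncomputable def theta10 (τ z : ℂ) : ℂ :=
  ∑' n : ℤ, Complex.exp (2*(π:ℂ)*Complex.I*((n:ℂ)+1/2)*z) *
    Complex.exp (2*(π:ℂ)*Complex.I*τ*((1/2)*((n:ℂ)+1/2)^2))

noncomputable def theta11 (τ z : ℂ) : ℂ :=
  Complex.I * ∑' n : ℤ, (-1:ℂ)^n * Complex.exp (2*(π:ℂ)*Complex.I*((n:ℂ)+1/2)*z) *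
    Complex.exp (2*(π:ℂ)*Complex.I*τ*((1/2)*((n:ℂ)+1/2)^2))

/-!
Write ϑ₁₁ through θ = `jacobiTheta₂` and apply the functional equation of θ: with τ' = -1/τ,
ϑ₁₁(τ, aτ) = (-iτ)^(-1/2) e^(-πi/(4τ)) e^(-πia²τ - πia) θ(w - τ'/2, τ') for w = a + 1/2.
The n-th term of θ(w - τ'/2, τ') is e^(2πinw) e^(πin(n-1)τ'), so as τ = iT ↓ 0, i.e. τ' = i/T → i∞,
only n = 0, 1 survive (dominated convergence) and θ → 1 + e^(2πiw) = 1 - e^(2πia). Finally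
e^(-πia) (1 - e^(2πia)) = -2i sin(πa) matches the normalising factor.
-/

lemma norm_jacobiTheta₂_term_sub_half (n : ℤ) (w τ : ℂ) :
    ‖jacobiTheta₂_term n (w - τ / 2) τ‖ = rexp (-π * (n ^ 2 - n) * τ.im - 2 * π * n * w.im) := by
  rw [norm_jacobiTheta₂_term, sub_im, div_ofNat_im]
  ring_nf

lemma jacobiTheta₂_term_one_sub_half (w τ : ℂ) :
    jacobiTheta₂_term 1 (w - τ / 2) τ = cexp (2 * π * I * w) := by
  rw [jacobiTheta₂_term]
  ring_nf

lemma tendsto_jacobiTheta₂_term_sub_half (w : ℂ) (n : ℤ) :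
    Tendsto (fun τ => jacobiTheta₂_term n (w - τ / 2) τ) (comap im atTop)
      (𝓝 (if n = 0 then 1 else if n = 1 then cexp (2 * π * I * w) else 0)) := by
  by_cases h₀ : n = 0
  · simp [h₀, jacobiTheta₂_term, tendsto_const_nhds]
  by_cases h₁ : n = 1
  · simp [h₁, jacobiTheta₂_term_one_sub_half, tendsto_const_nhds]
  have hpos : (0 : ℝ) < n ^ 2 - n := by
    have : (0 : ℤ) < n ^ 2 - n := by
      rcases lt_or_gt_of_ne h₀ with h | h
      · nlinarith
      · nlinarith [show 2 ≤ n by omega]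
    exact_mod_cast this
  simp only [h₀, h₁, if_false]
  rw [tendsto_zero_iff_norm_tendsto_zero]
  simp_rw [norm_jacobiTheta₂_term_sub_half]
  refine Real.tendsto_exp_atBot.comp (tendsto_atBot_add_const_right _ _ ?_)
  refine tendsto_comap.const_mul_atTop_of_neg ?_
  nlinarith [pi_pos]

lemma tendsto_jacobiTheta₂_sub_half (w : ℂ) :
    Tendsto (fun τ => jacobiTheta₂ (w - τ / 2) τ) (comap im atTop)
      (𝓝 (1 + cexp (2 * π * I * w))) := by
  have hbound : ∀ᶠ τ in comap im atTop, ∀ n : ℤ,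
      ‖jacobiTheta₂_term n (w - τ / 2) τ‖ ≤ ‖jacobiTheta₂_term n (w - I / 2) I‖ := by
    filter_upwards [tendsto_comap.eventually_ge_atTop 1] with τ hτ n
    simp only [norm_jacobiTheta₂_term_sub_half, I_im, Real.exp_le_exp]
    have hn : (n : ℝ) ≤ n ^ 2 := by exact_mod_cast Int.le_self_sq n
    nlinarith [mul_nonneg (mul_nonneg pi_pos.le (sub_nonneg.mpr hn)) (sub_nonneg.mpr hτ)]
  have hsum : Summable fun n : ℤ => ‖jacobiTheta₂_term n (w - I / 2) I‖ :=
    ((summable_jacobiTheta₂_term_iff _ _).mpr (by simp)).norm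
  have := tendsto_tsum_of_dominated_convergence hsum (tendsto_jacobiTheta₂_term_sub_half w) hbound
  rwa [tsum_eq_sum (s := {0, 1}) fun n hn => by simp_all, Finset.sum_pair zero_ne_one,
    if_pos rfl, if_neg one_ne_zero, if_pos rfl] at this

lemma theta11_eq_jacobiTheta₂ (τ z : ℂ) :
    theta11 τ z = I * cexp (π * I * τ / 4 + π * I * z) * jacobiTheta₂ (z + (1 + τ) / 2) τ := by
  rw [theta11, jacobiTheta₂, mul_assoc I]
  congr 1
  rw [← tsum_mul_left]
  refine tsum_congr fun n => ?_
  have hsign : (-1 : ℂ) ^ n = cexp (n * (π * I)) := by rw [exp_int_mul, exp_pi_mul_I]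
  rw [hsign, jacobiTheta₂_term, ← Complex.exp_add, ← Complex.exp_add, ← Complex.exp_add]
  ring_nf

lemma theta11_mul_eq_jacobiTheta₂_neg_one_div (a : ℂ) {τ : ℂ} (hτ : τ ≠ 0) :
    theta11 τ (a * τ) = (-I * τ) ^ (-(1 / 2) : ℂ) * cexp (-(π * I) / (4 * τ)) *
      (cexp (-π * I * a ^ 2 * τ - π * I * a) *
        jacobiTheta₂ (a + 1 / 2 - (-1 / τ) / 2) (-1 / τ)) := by
  have hI : I = cexp (π * I / 2) := by
    rw [show π * I / 2 = (π / 2 : ℂ) * I by ring, exp_mul_I, Complex.cos_pi_div_two,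
      Complex.sin_pi_div_two]
    ring
  have hexp : I * cexp (π * I * τ / 4 + π * I * (a * τ)) *
      cexp (-π * I * (a * τ + (1 + τ) / 2) ^ 2 / τ) =
        cexp (-(π * I) / (4 * τ)) * cexp (-π * I * a ^ 2 * τ - π * I * a) := by
    nth_rw 1 [hI]
    rw [← Complex.exp_add, ← Complex.exp_add, ← Complex.exp_add]
    congr 1
    field_simp
    ring
  rw [theta11_eq_jacobiTheta₂, jacobiTheta₂_functional_equation, cpow_neg, inv_eq_one_div,
    show (a * τ + (1 + τ) / 2) / τ = a + 1 / 2 - (-1 / τ) / 2 by field_simp; ring]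
  linear_combination
    (1 / (-I * τ) ^ (1 / 2 : ℂ) * jacobiTheta₂ (a + 1 / 2 - (-1 / τ) / 2) (-1 / τ)) * hexp

lemma theta11_mul_div_eq (a : ℂ) {τ : ℂ} (hτ : τ ≠ 0) (c : ℂ) :
    theta11 τ (a * τ) / (-((-I * τ) ^ (-(1 / 2) : ℂ)) * c * cexp (-(π * I) / (4 * τ))) =
      cexp (-π * I * a ^ 2 * τ - π * I * a) *
        jacobiTheta₂ (a + 1 / 2 - (-1 / τ) / 2) (-1 / τ) / -c := by
  have hs : (-I * τ) ^ (-(1 / 2) : ℂ) * cexp (-(π * I) / (4 * τ)) ≠ 0 :=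
    mul_ne_zero (by simp [cpow_eq_zero_iff, hτ]) (Complex.exp_ne_zero _)
  rw [theta11_mul_eq_jacobiTheta₂_neg_one_div a hτ, ← mul_div_mul_left _ (-c) hs]
  ring_nf

lemma exp_neg_pi_I_mul_one_add_exp_eq_sin (a : ℂ) :
    cexp (-π * I * a) * (1 + cexp (2 * π * I * (a + 1 / 2))) =
      -(2 * I * Complex.sin (a * π)) := by
  set u := cexp (a * π * I)
  set v := cexp (-(a * π) * I)
  have huv : v * u = 1 := by rw [← Complex.exp_add]; ring_nf; simp
  have hv : cexp (-π * I * a) = v := by congr 1; ring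
  have hu : cexp (2 * π * I * (a + 1 / 2)) = -u ^ 2 := by
    rw [show 2 * π * I * (a + 1 / 2) = a * π * I + a * π * I + π * I by ring, Complex.exp_add,
      Complex.exp_add, exp_pi_mul_I]
    ring
  rw [hv, hu, show -(2 * I * Complex.sin (a * π)) = -(I * (2 * Complex.sin (a * π))) by ring,
    two_sin]
  linear_combination (-u) * huv + (v - u) * I_sq

lemma tendsto_neg_one_div_I_mul_nhdsGT :
    Tendsto (fun T : ℝ => -1 / (I * T)) (𝓝[>] 0) (comap im atTop) := by
  refine tendsto_comap_iff.mpr (tendsto_inv_nhdsGT_zero.congr fun T => ?_)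
  rcases eq_or_ne T 0 with rfl | hT
  · simp
  · simp [div_eq_mul_inv]
    field_simp

theorem stmt18 (a : ℂ) (ha : Complex.sin (a*(π:ℂ)) ≠ 0) :
    Filter.Tendsto (fun T : ℝ =>
        theta11 (Complex.I*T) (a*(Complex.I*T)) /
          (-((-Complex.I*(Complex.I*(T:ℂ))) ^ (-(1/2) : ℂ)) * (2 * Complex.I * Complex.sin (a*(π:ℂ))) *
            Complex.exp (-((π:ℂ)*Complex.I)/(4*(Complex.I*(T:ℂ))))))
      (nhdsWithin 0 (Set.Ioi 0)) (nhds 1) := by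
  have hJ : Tendsto (fun T : ℝ => jacobiTheta₂ (a + 1 / 2 - (-1 / (I * T)) / 2) (-1 / (I * T)))
      (𝓝[>] 0) (𝓝 (1 + cexp (2 * π * I * (a + 1 / 2)))) :=
    (tendsto_jacobiTheta₂_sub_half (a + 1 / 2)).comp tendsto_neg_one_div_I_mul_nhdsGT
  have hE : Tendsto (fun T : ℝ => cexp (-π * I * a ^ 2 * (I * T) - π * I * a)) (𝓝[>] 0)
      (𝓝 (cexp (-π * I * a))) := by
    have hcont : Continuous fun T : ℝ => cexp (-π * I * a ^ 2 * (I * T) - π * I * a) := by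
      fun_prop
    simpa using (hcont.tendsto 0).mono_left nhdsWithin_le_nhds
  have hlim := (hE.mul hJ).div_const (-(2 * I * Complex.sin (a * π)))
  rw [exp_neg_pi_I_mul_one_add_exp_eq_sin, div_self (by simpa using ha)] at hlim
  refine hlim.congr' ?_
  filter_upwards [self_mem_nhdsWithin] with T hT
  rw [theta11_mul_div_eq a (mul_ne_zero I_ne_zero (ofReal_ne_zero.mpr hT.ne'))]

end
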